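/- Let α ∈ ℝ, let b : ℝ → ℝ be continuously differentiable, and let φ : ℝ² → ℝ, φ = φ(t,s), be twice continuously differentiable with φ_s(t,s) > 0 for all (t,s), satisfying the one-dimensional SMHD equation in Lagrangian coordinates φ_tt − α² φ_ss + ∂_s(1/φ_s²) − b′(φ) = 0. Then the local conservation law of momentum holds identically: ∂_t(φ_t φ_s) − ∂_s( (φ_t² + α² φ_s²)/2 − 2/φ_s + b(φ) ) = 0 for all (t,s). -/

import Mathlib

/-- Partial derivative with respect to the first (time) variable. -/
noncomputable def pt (f : ℝ → ℝ → ℝ) (t s : ℝ) : ℝ := deriv (fun t' => f t' s) t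

/-- Partial derivative with respect to the second (space) variable. -/
noncomputable def ps (f : ℝ → ℝ → ℝ) (t s : ℝ) : ℝ := deriv (fun s' => f t s') s

/-!
Write `u = φ_t` and `v = φ_s`. The momentum law is `v` times the SMHD equation:

  `∂_t(u v) - ∂_s((u² + α² v²)/2 - 2/v + b(φ))`
  `  = v (u_t - α² v_s - 2 v_s / v³ - b'(φ)) + u (v_t - u_s)`,

and the last term vanishes because the mixed partials `v_t = φ_st` and `u_s = φ_ts` of a `C²`
function agree.
-/

open Function

theorem fderiv_fderiv_apply_const {𝕜 E F : Type*} [NontriviallyNormedField 𝕜]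
    [NormedAddCommGroup E] [NormedSpace 𝕜 E] [NormedAddCommGroup F] [NormedSpace 𝕜 F]
    {g : E → F} {p : E} (w : E) (hg : DifferentiableAt 𝕜 (fderiv 𝕜 g) p) (v : E) :
    fderiv 𝕜 (fun q => fderiv 𝕜 g q w) p v = fderiv 𝕜 (fderiv 𝕜 g) p v w := by
  rw [fderiv_clm_apply hg (differentiableAt_const w)]
  simp

section PartialDerivatives

variable {f : ℝ → ℝ → ℝ} {t s : ℝ}

theorem hasDerivAt_fderiv_fst (hf : DifferentiableAt ℝ (uncurry f) (t, s)) :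
    HasDerivAt (fun t' => f t' s) (fderiv ℝ (uncurry f) (t, s) (1, 0)) t :=
  hf.hasFDerivAt.comp_hasDerivAt (f := fun t' => (t', s)) t
    ((hasDerivAt_id t).prodMk (hasDerivAt_const t s))

theorem hasDerivAt_fderiv_snd (hf : DifferentiableAt ℝ (uncurry f) (t, s)) :
    HasDerivAt (fun s' => f t s') (fderiv ℝ (uncurry f) (t, s) (0, 1)) s :=
  hf.hasFDerivAt.comp_hasDerivAt (f := fun s' => (t, s')) s
    ((hasDerivAt_const s t).prodMk (hasDerivAt_id s))

theorem pt_eq_fderiv (hf : DifferentiableAt ℝ (uncurry f) (t, s)) :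
    pt f t s = fderiv ℝ (uncurry f) (t, s) (1, 0) :=
  (hasDerivAt_fderiv_fst hf).deriv

theorem ps_eq_fderiv (hf : DifferentiableAt ℝ (uncurry f) (t, s)) :
    ps f t s = fderiv ℝ (uncurry f) (t, s) (0, 1) :=
  (hasDerivAt_fderiv_snd hf).deriv

theorem hasDerivAt_pt (hf : DifferentiableAt ℝ (uncurry f) (t, s)) :
    HasDerivAt (fun t' => f t' s) (pt f t s) t :=
  pt_eq_fderiv hf ▸ hasDerivAt_fderiv_fst hf

theorem hasDerivAt_ps (hf : DifferentiableAt ℝ (uncurry f) (t, s)) :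
    HasDerivAt (fun s' => f t s') (ps f t s) s :=
  ps_eq_fderiv hf ▸ hasDerivAt_fderiv_snd hf

theorem uncurry_pt (hf : Differentiable ℝ (uncurry f)) :
    uncurry (pt f) = fun p => fderiv ℝ (uncurry f) p (1, 0) :=
  funext fun p => pt_eq_fderiv (hf p)

theorem uncurry_ps (hf : Differentiable ℝ (uncurry f)) :
    uncurry (ps f) = fun p => fderiv ℝ (uncurry f) p (0, 1) :=
  funext fun p => ps_eq_fderiv (hf p)

theorem contDiff_uncurry_pt {n : WithTop ℕ∞} (hf : ContDiff ℝ (n + 1) (uncurry f)) :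
    ContDiff ℝ n (uncurry (pt f)) := by
  rw [uncurry_pt (hf.differentiable (by simp))]
  exact (hf.fderiv_right le_rfl).clm_apply contDiff_const

theorem contDiff_uncurry_ps {n : WithTop ℕ∞} (hf : ContDiff ℝ (n + 1) (uncurry f)) :
    ContDiff ℝ n (uncurry (ps f)) := by
  rw [uncurry_ps (hf.differentiable (by simp))]
  exact (hf.fderiv_right le_rfl).clm_apply contDiff_const

theorem differentiable_uncurry_pt (hf : ContDiff ℝ 2 (uncurry f)) :
    Differentiable ℝ (uncurry (pt f)) :=
  (contDiff_uncurry_pt (n := 1) hf).differentiable one_ne_zero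

theorem differentiable_uncurry_ps (hf : ContDiff ℝ 2 (uncurry f)) :
    Differentiable ℝ (uncurry (ps f)) :=
  (contDiff_uncurry_ps (n := 1) hf).differentiable one_ne_zero

theorem ps_pt_eq_pt_ps (hf : ContDiff ℝ 2 (uncurry f)) : ps (pt f) t s = pt (ps f) t s := by
  have hf' : Differentiable ℝ (uncurry f) := hf.differentiable two_ne_zero
  have hF : DifferentiableAt ℝ (fderiv ℝ (uncurry f)) (t, s) :=
    (hf.fderiv_right (m := 1) le_rfl).differentiable one_ne_zero _
  rw [ps_eq_fderiv (differentiable_uncurry_pt hf _), pt_eq_fderiv (differentiable_uncurry_ps hf _),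
    uncurry_pt hf', uncurry_ps hf', fderiv_fderiv_apply_const _ hF, fderiv_fderiv_apply_const _ hF]
  exact (hf.contDiffAt.isSymmSndFDerivAt (by simp)).eq _ _

end PartialDerivatives

section Momentum

variable (α : ℝ) (b : ℝ → ℝ) (φ : ℝ → ℝ → ℝ)

noncomputable def smhdOperator (t s : ℝ) : ℝ :=
  pt (pt φ) t s - α ^ 2 * ps (ps φ) t s + ps (fun t s => 1 / (ps φ t s) ^ 2) t s
    - deriv b (φ t s)

noncomputable def momentumDensity (t s : ℝ) : ℝ := pt φ t s * ps φ t s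

noncomputable def momentumFlux (t s : ℝ) : ℝ :=
  ((pt φ t s) ^ 2 + α ^ 2 * (ps φ t s) ^ 2) / 2 - 2 / ps φ t s + b (φ t s)

variable {α b φ} {t s : ℝ}

theorem pt_momentumDensity (hφ : ContDiff ℝ 2 (uncurry φ)) :
    pt (momentumDensity φ) t s = pt (pt φ) t s * ps φ t s + pt φ t s * pt (ps φ) t s :=
  ((hasDerivAt_pt (differentiable_uncurry_pt hφ _)).mul
    (hasDerivAt_pt (differentiable_uncurry_ps hφ _))).deriv

theorem ps_momentumFlux (hb : DifferentiableAt ℝ b (φ t s)) (hφ : ContDiff ℝ 2 (uncurry φ))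
    (hv : ps φ t s ≠ 0) :
    ps (momentumFlux α b φ) t s = pt φ t s * ps (pt φ) t s + α ^ 2 * ps φ t s * ps (ps φ) t s
      + 2 * ps (ps φ) t s / ps φ t s ^ 2 + deriv b (φ t s) * ps φ t s := by
  have hus := hasDerivAt_ps (differentiable_uncurry_pt hφ (t, s))
  have hvs := hasDerivAt_ps (differentiable_uncurry_ps hφ (t, s))
  have hφ_s := hasDerivAt_ps (hφ.differentiable two_ne_zero (t, s))
  refine (((((hus.fun_pow 2).add ((hvs.fun_pow 2).const_mul (α ^ 2))).div_const 2).sub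
    ((hasDerivAt_const s 2).fun_div hvs hv)).add (hb.hasDerivAt.comp s hφ_s)).deriv.trans ?_
  field_simp
  ring

theorem ps_one_div_sq_ps (hφ : ContDiff ℝ 2 (uncurry φ)) (hv : ps φ t s ≠ 0) :
    ps (fun t s => 1 / (ps φ t s) ^ 2) t s = -2 * ps (ps φ) t s / ps φ t s ^ 3 := by
  have hvs := hasDerivAt_ps (differentiable_uncurry_ps hφ (t, s))
  refine ((hasDerivAt_const s 1).fun_div (hvs.fun_pow 2) (pow_ne_zero 2 hv)).deriv.trans ?_
  field_simp
  ring

theorem pt_momentumDensity_sub_ps_momentumFlux (hb : DifferentiableAt ℝ b (φ t s))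
    (hφ : ContDiff ℝ 2 (uncurry φ)) (hv : ps φ t s ≠ 0) :
    pt (momentumDensity φ) t s - ps (momentumFlux α b φ) t s
      = ps φ t s * smhdOperator α b φ t s := by
  rw [pt_momentumDensity hφ, ps_momentumFlux hb hφ hv, smhdOperator, ps_one_div_sq_ps hφ hv,
    ps_pt_eq_pt_ps hφ]
  field_simp
  ring

end Momentum

theorem smhd_momentum_conservation
    (α : ℝ) (b : ℝ → ℝ) (hb : ContDiff ℝ 1 b)
    (φ : ℝ → ℝ → ℝ)
    (hφ : ContDiff ℝ 2 (fun p : ℝ × ℝ => φ p.1 p.2))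
    (hpos : ∀ t s, 0 < ps φ t s)
    (hpde : ∀ t s,
      pt (pt φ) t s - α ^ 2 * ps (ps φ) t s
        + ps (fun t s => 1 / (ps φ t s) ^ 2) t s - deriv b (φ t s) = 0) :
    ∀ t s,
      pt (fun t s => pt φ t s * ps φ t s) t s
        - ps (fun t s =>
            ((pt φ t s) ^ 2 + α ^ 2 * (ps φ t s) ^ 2) / 2
              - 2 / ps φ t s + b (φ t s)) t s = 0 := by
  intro t s
  calc _ = ps φ t s * smhdOperator α b φ t s :=
        pt_momentumDensity_sub_ps_momentumFlux (hb.differentiable one_ne_zero _) hφ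
          (hpos t s).ne'
    _ = 0 := mul_eq_zero_of_right _ (hpde t s)
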